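/- Suppose a + 2b ≠ 0 and 2a + b ≠ 0 (nontrivial-center case excluded). Then the function G = y_1^{2a+b} / x_3^{a+2b} (interpreted for integer exponents, or as (2a+b)·log y_1 − (a+2b)·log x_3 in general) is an invariant of the coadjoint representation of d_5^{a,b}, and {F_1, G} with F_1 = (2x_0 y_1 + x_2^2 − 2x_1 x_3)^3/(x_3^2 y_1^2) forms a fundamental set of two functionally independent invariants. -/

import Mathlib

/-- Structure constants (listed direction) of `d_5^{a,b}`; basis
`X_0 ↦ 0, …, X_3 ↦ 3, Y_1 ↦ 4, V ↦ 5`. -/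
noncomputable def strAB (a b : ℂ) (i j s : ℕ) : ℂ :=
  (if i = 0 ∧ (j = 1 ∨ j = 2) ∧ s = j + 1 then 1 else 0) +
  (if i = 1 ∧ j = 2 ∧ s = 4 then 1 else 0) +
  (if i = 5 ∧ j = 0 ∧ s = 0 then a else 0) +
  (if i = 5 ∧ j = 1 ∧ s = 1 then b else 0) +
  (if i = 5 ∧ j = 2 ∧ s = 2 then a + b else 0) +
  (if i = 5 ∧ j = 3 ∧ s = 3 then 2 * a + b else 0) +
  (if i = 5 ∧ j = 4 ∧ s = 4 then a + 2 * b else 0)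

/-- Antisymmetrized structure constants of `d_5^{a,b}`. -/
noncomputable def CAB (a b : ℂ) (i j s : ℕ) : ℂ := strAB a b i j s - strAB a b j i s

/-- Partial derivative `∂F/∂x_j` in coordinates. -/
noncomputable def pd (j : ℕ) (F : (ℕ → ℂ) → ℂ) (p : ℕ → ℂ) : ℂ :=
  deriv (fun t => F (Function.update p j t)) (p j)

/-- The coadjoint operator `X̂_i = −C_{ij}^k x_k ∂_{x_j}` of `d_5^{a,b}`. -/
noncomputable def opAB (a b : ℂ) (i : ℕ) (F : (ℕ → ℂ) → ℂ) (p : ℕ → ℂ) : ℂ :=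
  ∑ j ∈ Finset.range 6, (-(∑ k ∈ Finset.range 6, CAB a b i j k * p k)) * pd j F p

/-- The rational function `F_1 = (2x_0y_1 + x_2² − 2x_1x_3)³/(x_3²y_1²)`. -/
noncomputable def F1 (p : ℕ → ℂ) : ℂ :=
  (2 * p 0 * p 4 + (p 2) ^ 2 - 2 * p 1 * p 3) ^ 3 / ((p 3) ^ 2 * (p 4) ^ 2)

/-- The invariant `G = y_1^{2a+b}/x_3^{a+2b}`, in its general (logarithmic) form
`G = (2a+b)·log y_1 − (a+2b)·log x_3`. -/
noncomputable def G (a b : ℂ) (p : ℕ → ℂ) : ℂ :=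
  (2 * a + b) * Complex.log (p 4) - (a + 2 * b) * Complex.log (p 3)

/-!
The coordinates `x_3`, `y_1` and the polynomials `N = 2x_0y_1 + x_2² − 2x_1x_3`,
`D = x_3²y_1²` are relative invariants: `X̂_0, …, X̂_3, Ŷ_1` annihilate them and `V̂` multiplies
them by `−(2a+b)`, `−(a+2b)`, `−2(a+b)`, `−6(a+b)`. Each `X̂_i` is a first-order operator, so
`F_1 = N³/D` and `G = (2a+b) log y_1 − (a+2b) log x_3` are annihilated because their weights
cancel. At `x_2 = x_3 = y_1 = 1` (other coordinates `0`) the gradient of `G` is `(2a+b) dy_1`,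
while that of `F_1` has a nonzero `dx_2`-component.
-/

open Function Complex

@[fun_prop]
theorem differentiable_update_apply (p : ℕ → ℂ) (j k : ℕ) :
    Differentiable ℂ (fun t => update p j t k) := by
  rcases eq_or_ne k j with rfl | hk
  · simp
  · simp [hk]

theorem linearIndependent_pair_of_apply {ι K : Type*} [Field K] {v w : ι → K} {k l : ι}
    (hvk : v k ≠ 0) (hwk : w k = 0) (hwl : w l ≠ 0) : LinearIndependent K ![v, w] := by
  refine LinearIndependent.pair_iff.2 fun s t hst => ?_
  have hs : s = 0 := by simpa [hwk, hvk] using congrFun hst k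
  subst hs
  simpa [hwl] using congrFun hst l

def SeparatelyDifferentiable (f : (ℕ → ℂ) → ℂ) : Prop :=
  ∀ p j, Differentiable ℂ fun t => f (update p j t)

section PartialDerivative

variable {f g : (ℕ → ℂ) → ℂ} {j : ℕ} {p : ℕ → ℂ}

theorem pd_pow_div (n : ℕ) (hf : SeparatelyDifferentiable f) (hg : SeparatelyDifferentiable g)
    (hg0 : g p ≠ 0) :
    pd j (fun q => f q ^ n / g q) p =
      n * f p ^ (n - 1) / g p * pd j f p + -(f p ^ n / g p ^ 2) * pd j g p := by
  have h := ((hf p j _).hasDerivAt.fun_pow n).fun_div (hg p j _).hasDerivAt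
    (by rwa [update_eq_self])
  rw [update_eq_self] at h
  unfold pd
  rw [h.deriv]
  field_simp
  ring

theorem pd_mul_log_sub_mul_log (c d : ℂ) (hf : SeparatelyDifferentiable f)
    (hg : SeparatelyDifferentiable g) (hf0 : f p ∈ slitPlane) (hg0 : g p ∈ slitPlane) :
    pd j (fun q => c * log (f q) - d * log (g q)) p =
      c / f p * pd j f p + -(d / g p) * pd j g p := by
  have h := (((hf p j _).hasDerivAt.clog (by rwa [update_eq_self])).const_mul c).fun_sub
    (((hg p j _).hasDerivAt.clog (by rwa [update_eq_self])).const_mul d)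
  rw [update_eq_self] at h
  unfold pd
  rw [h.deriv]
  ring

theorem pd_apply (k : ℕ) : pd j (fun q => q k) p = if j = k then 1 else 0 := by
  unfold pd
  split_ifs with h
  · subst h
    simp
  · simp [update_of_ne (Ne.symm h)]

end PartialDerivative

section CoadjointOperators

variable (a b : ℂ) (F : (ℕ → ℂ) → ℂ) (p : ℕ → ℂ)

theorem opAB_X0 : opAB a b 0 F p = -(p 2) * pd 1 F p - p 3 * pd 2 F p + a * p 0 * pd 5 F p := by
  norm_num [opAB, CAB, strAB, Finset.sum_range_succ]
  ring

theorem opAB_X1 : opAB a b 1 F p = p 2 * pd 0 F p - p 4 * pd 2 F p + b * p 1 * pd 5 F p := by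
  norm_num [opAB, CAB, strAB, Finset.sum_range_succ]
  ring

theorem opAB_X2 :
    opAB a b 2 F p = p 3 * pd 0 F p + p 4 * pd 1 F p + (a + b) * p 2 * pd 5 F p := by
  norm_num [opAB, CAB, strAB, Finset.sum_range_succ]

theorem opAB_X3 : opAB a b 3 F p = (2 * a + b) * p 3 * pd 5 F p := by
  norm_num [opAB, CAB, strAB, Finset.sum_range_succ]

theorem opAB_Y1 : opAB a b 4 F p = (a + 2 * b) * p 4 * pd 5 F p := by
  norm_num [opAB, CAB, strAB, Finset.sum_range_succ]

theorem opAB_V : opAB a b 5 F p = -(a * p 0) * pd 0 F p - b * p 1 * pd 1 F p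
    - (a + b) * p 2 * pd 2 F p - (2 * a + b) * p 3 * pd 3 F p - (a + 2 * b) * p 4 * pd 4 F p := by
  norm_num [opAB, CAB, strAB, Finset.sum_range_succ]
  ring

theorem opAB_eq_of_pd_eq {f g : (ℕ → ℂ) → ℂ} (c d : ℂ)
    (h : ∀ j < 6, pd j F p = c * pd j f p + d * pd j g p) (i : ℕ) :
    opAB a b i F p = c * opAB a b i f p + d * opAB a b i g p := by
  simp only [opAB, Finset.mul_sum, ← Finset.sum_add_distrib]
  refine Finset.sum_congr rfl fun j hj => ?_
  rw [h j (Finset.mem_range.1 hj)]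
  ring

end CoadjointOperators

def IsRelInvariant (a b w : ℂ) (f : (ℕ → ℂ) → ℂ) : Prop :=
  ∀ p, ∀ i < 6, opAB a b i f p = if i = 5 then -(w * f p) else 0

namespace IsRelInvariant

variable {a b wf wg : ℂ} {f g : (ℕ → ℂ) → ℂ} {p : ℕ → ℂ} {i : ℕ}

theorem opAB_eq_zero_of_pd_eq (hf : IsRelInvariant a b wf f) (hg : IsRelInvariant a b wg g)
    {F : (ℕ → ℂ) → ℂ} {c d : ℂ} (hF : ∀ j < 6, pd j F p = c * pd j f p + d * pd j g p)
    (hw : c * (wf * f p) + d * (wg * g p) = 0) (hi : i < 6) : opAB a b i F p = 0 := by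
  rw [opAB_eq_of_pd_eq a b F p c d hF, hf p i hi, hg p i hi]
  split_ifs
  · linear_combination -hw
  · ring

theorem opAB_pow_div_eq_zero (hf : IsRelInvariant a b wf f) (hg : IsRelInvariant a b wg g)
    (n : ℕ) (hw : n * wf = wg) (hfd : SeparatelyDifferentiable f)
    (hgd : SeparatelyDifferentiable g) (hg0 : g p ≠ 0) (hi : i < 6) :
    opAB a b i (fun q => f q ^ n / g q) p = 0 := by
  refine hf.opAB_eq_zero_of_pd_eq hg (fun j _ => pd_pow_div n hfd hgd hg0) ?_ hi
  rw [← hw]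
  rcases n with _ | n
  · simp
  · rw [Nat.add_sub_cancel]
    field_simp
    ring

theorem opAB_mul_log_sub_mul_log_eq_zero (hf : IsRelInvariant a b wf f)
    (hg : IsRelInvariant a b wg g) (hfd : SeparatelyDifferentiable f)
    (hgd : SeparatelyDifferentiable g) (hf0 : f p ∈ slitPlane) (hg0 : g p ∈ slitPlane)
    (hi : i < 6) : opAB a b i (fun q => wg * log (f q) - wf * log (g q)) p = 0 := by
  refine hf.opAB_eq_zero_of_pd_eq hg
    (fun j _ => pd_mul_log_sub_mul_log wg wf hfd hgd hf0 hg0) ?_ hi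
  field_simp [slitPlane_ne_zero hf0, slitPlane_ne_zero hg0]
  ring

end IsRelInvariant

def F1num (p : ℕ → ℂ) : ℂ := 2 * p 0 * p 4 + p 2 ^ 2 - 2 * p 1 * p 3

def F1den (p : ℕ → ℂ) : ℂ := p 3 ^ 2 * p 4 ^ 2

theorem separatelyDifferentiable_apply (k : ℕ) : SeparatelyDifferentiable fun q => q k :=
  fun p j => by fun_prop

theorem separatelyDifferentiable_F1num : SeparatelyDifferentiable F1num :=
  fun p j => by unfold F1num; fun_prop

theorem separatelyDifferentiable_F1den : SeparatelyDifferentiable F1den :=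
  fun p j => by unfold F1den; fun_prop

section RelativeInvariants

variable (a b : ℂ)

theorem isRelInvariant_apply_three : IsRelInvariant a b (2 * a + b) fun q => q 3 := by
  intro p i hi
  interval_cases i
  all_goals simp [opAB_X0, opAB_X1, opAB_X2, opAB_X3, opAB_Y1, opAB_V, pd_apply]

theorem isRelInvariant_apply_four : IsRelInvariant a b (a + 2 * b) fun q => q 4 := by
  intro p i hi
  interval_cases i
  all_goals simp [opAB_X0, opAB_X1, opAB_X2, opAB_X3, opAB_Y1, opAB_V, pd_apply]

theorem isRelInvariant_F1num : IsRelInvariant a b (2 * (a + b)) F1num := by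
  intro p i hi
  interval_cases i
  all_goals simp [opAB_X0, opAB_X1, opAB_X2, opAB_X3, opAB_Y1, opAB_V, pd, F1num]
  all_goals ring

theorem isRelInvariant_F1den : IsRelInvariant a b (6 * (a + b)) F1den := by
  intro p i hi
  interval_cases i
  all_goals simp [opAB_X0, opAB_X1, opAB_X2, opAB_X3, opAB_Y1, opAB_V, pd, F1den]
  all_goals ring

end RelativeInvariants

section Invariants

variable {a b : ℂ} {p : ℕ → ℂ} {i : ℕ}

theorem opAB_F1_eq_zero (hp3 : p 3 ≠ 0) (hp4 : p 4 ≠ 0) (hi : i < 6) : opAB a b i F1 p = 0 :=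
  (isRelInvariant_F1num a b).opAB_pow_div_eq_zero (isRelInvariant_F1den a b) 3 (by ring)
    separatelyDifferentiable_F1num separatelyDifferentiable_F1den (by simp [F1den, hp3, hp4]) hi

theorem opAB_G_eq_zero (hp3 : p 3 ∈ slitPlane) (hp4 : p 4 ∈ slitPlane) (hi : i < 6) :
    opAB a b i (G a b) p = 0 :=
  (isRelInvariant_apply_four a b).opAB_mul_log_sub_mul_log_eq_zero
    (isRelInvariant_apply_three a b)
    (separatelyDifferentiable_apply 4) (separatelyDifferentiable_apply 3) hp4 hp3 hi

def basePoint : ℕ → ℂ := fun n => if n = 2 ∨ n = 3 ∨ n = 4 then 1 else 0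

theorem pd_two_F1_basePoint : pd 2 F1 basePoint = 6 := by
  rw [show F1 = fun q => F1num q ^ 3 / F1den q from rfl,
    pd_pow_div 3 separatelyDifferentiable_F1num separatelyDifferentiable_F1den
      (by simp [F1den, basePoint])]
  norm_num [pd, F1num, F1den, basePoint]

theorem pd_G_basePoint (j : ℕ) :
    pd j (G a b) basePoint = (2 * a + b) * pd j (fun q => q 4) basePoint
      - (a + 2 * b) * pd j (fun q => q 3) basePoint := by
  rw [show G a b = fun q => (2 * a + b) * log (q 4) - (a + 2 * b) * log (q 3) from rfl,
    pd_mul_log_sub_mul_log _ _ (separatelyDifferentiable_apply 4)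
      (separatelyDifferentiable_apply 3) (by simp [basePoint]) (by simp [basePoint])]
  simp [basePoint]
  ring

end Invariants

theorem invariants_d5ab_trivial_center_general (a b : ℂ)
    (h2 : 2 * a + b ≠ 0) :
    (∀ p : ℕ → ℂ, p 3 ∈ Complex.slitPlane → p 4 ∈ Complex.slitPlane → ∀ i < 6,
      opAB a b i (G a b) p = 0 ∧ opAB a b i F1 p = 0) ∧
    (∃ p : ℕ → ℂ, p 3 ∈ Complex.slitPlane ∧ p 4 ∈ Complex.slitPlane ∧
      LinearIndependent ℂ
        ![fun j : Fin 6 => pd j.1 F1 p, fun j : Fin 6 => pd j.1 (G a b) p]) := by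
  refine ⟨fun p hp3 hp4 i hi => ⟨opAB_G_eq_zero hp3 hp4 hi,
    opAB_F1_eq_zero (slitPlane_ne_zero hp3) (slitPlane_ne_zero hp4) hi⟩,
    basePoint, by simp [basePoint], by simp [basePoint], ?_⟩
  refine linearIndependent_pair_of_apply (k := 2) (l := 4) ?_ ?_ ?_
  · simp [pd_two_F1_basePoint]
  · simp [pd_G_basePoint, pd_apply]
  · simpa [pd_G_basePoint, pd_apply] using h2

/-- In the trivial-center case `a + 2b ≠ 0` and `2a + b ≠ 0`, the function
`G = y_1^{2a+b}/x_3^{a+2b}` (logarithmic form) is an invariant of the coadjoint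
representation of `d_5^{a,b}`, and `{F_1, G}` is a fundamental set of two
functionally independent invariants. -/
theorem invariants_d5ab_trivial_center (a b : ℂ)
    (h1 : a + 2 * b ≠ 0) (h2 : 2 * a + b ≠ 0) :
    (∀ p : ℕ → ℂ, p 3 ∈ Complex.slitPlane → p 4 ∈ Complex.slitPlane → ∀ i < 6,
      opAB a b i (G a b) p = 0 ∧ opAB a b i F1 p = 0) ∧
    (∃ p : ℕ → ℂ, p 3 ∈ Complex.slitPlane ∧ p 4 ∈ Complex.slitPlane ∧
      LinearIndependent ℂ
        ![fun j : Fin 6 => pd j.1 F1 p, fun j : Fin 6 => pd j.1 (G a b) p]) :=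
  invariants_d5ab_trivial_center_general a b h2
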